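/- Let α, β, γ, c ∈ ℝ with 4αγ − β² > 0, and define z(λ) = (2/√(4αγ−β²))·arctan((β + 2γλ)/√(4αγ−β²)) + c and Γ(λ) = 1 − (α + βλ + γλ²)/λ². Then for every λ ≠ 0, z is differentiable at λ and z′(λ) = −1/(λ²·(Γ(λ) − 1)). -/

import Mathlib

/-! Completing the square, `4γ(α + βλ + γλ²) = (β + 2γλ)² + (4αγ − β²)`, shows that
`(2/s)·arctan((β + 2γλ)/s)` with `s = √(4αγ − β²)` is a primitive of `1/(α + βλ + γλ²)`,
while `−1/(λ²(Γ(λ) − 1))` is that same function once `λ² ≠ 0` cancels. -/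

open Real

theorem hasDerivAt_arctan_affine_div {a b s : ℝ} (hs : s ≠ 0) (x : ℝ) :
    HasDerivAt (fun x => arctan ((b + a * x) / s)) (a * s / (s ^ 2 + (b + a * x) ^ 2)) x := by
  have hu : HasDerivAt (fun x => (b + a * x) / s) (a / s) x := by
    simpa using (((hasDerivAt_id x).const_mul a).const_add b).div_const s
  refine ((hasDerivAt_arctan _).comp x hu).congr_deriv ?_
  field_simp

theorem hasDerivAt_arctan_primitive_inv_quadratic {α β γ : ℝ} (h : 0 < 4 * α * γ - β ^ 2)
    (x : ℝ) :
    HasDerivAt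
      (fun x => 2 / √(4 * α * γ - β ^ 2) * arctan ((β + 2 * γ * x) / √(4 * α * γ - β ^ 2)))
      (1 / (α + β * x + γ * x ^ 2)) x := by
  set s := √(4 * α * γ - β ^ 2)
  have hs : 0 < s := sqrt_pos.mpr h
  have hs2 : s ^ 2 = 4 * α * γ - β ^ 2 := sq_sqrt h.le
  have hsquare : 4 * γ * (α + β * x + γ * x ^ 2) = s ^ 2 + (β + 2 * γ * x) ^ 2 := by
    rw [hs2]; ring
  have hpos : 0 < 4 * γ * (α + β * x + γ * x ^ 2) := by rw [hsquare]; positivity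
  obtain ⟨h4γ, hq⟩ := mul_ne_zero_iff.mp hpos.ne'
  have hγ : γ ≠ 0 := right_ne_zero_of_mul h4γ
  refine ((hasDerivAt_arctan_affine_div hs.ne' x).const_mul (2 / s)).congr_deriv ?_
  rw [← hsquare]
  field_simp
  ring

theorem neg_one_div_sq_mul_one_sub_div_sq_sub_one {l : ℝ} (hl : l ≠ 0) (q : ℝ) :
    -1 / (l ^ 2 * ((1 - q / l ^ 2) - 1)) = 1 / q := by
  rw [sub_sub_cancel_left, mul_neg, mul_div_cancel₀ q (pow_ne_zero 2 hl), div_neg, neg_div,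
    neg_neg]

theorem z_solves_ODE_arctan (α β γ c : ℝ) (h : 0 < 4*α*γ - β^2) :
    let s : ℝ := Real.sqrt (4*α*γ - β^2)
    let z : ℝ → ℝ := fun l => 2/s * Real.arctan ((β + 2*γ*l)/s) + c
    let Γ : ℝ → ℝ := fun l => 1 - (α + β*l + γ*l^2)/l^2
    ∀ l : ℝ, l ≠ 0 →
      DifferentiableAt ℝ z l ∧ deriv z l = -1/(l^2*(Γ l - 1)) := by
  intro s z Γ l hl
  have hz : HasDerivAt z (1 / (α + β * l + γ * l ^ 2)) l :=
    (hasDerivAt_arctan_primitive_inv_quadratic h l).add_const c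
  exact ⟨hz.differentiableAt, hz.deriv.trans (neg_one_div_sq_mul_one_sub_div_sq_sub_one hl _).symm⟩
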